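/- The subspace K₊ of V-valued Laurent polynomials is isotropic for the loop-space form: Ω(f, g) = 0 for all f, g ∈ K₊. -/

import Mathlib

open Polynomial in
theorem algebraMap_ratFunc_eq_aeval (F : Type*) [Field F] (p : F[X]) :
    algebraMap F[X] (RatFunc F) p = Polynomial.aeval RatFunc.X p := by
  have h : (IsScalarTower.toAlgHom F F[X] (RatFunc F)) = Polynomial.aeval (RatFunc.X (K := F)) :=
    Polynomial.algHom_ext (by simp [RatFunc.algebraMap_X])
  exact DFunLike.congr_fun h p

open Polynomial in
/-- Injectivity of `aeval X⁻¹ : F[X] → F(q)`. -/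
theorem aeval_inv_injective (F : Type*) [Field F] :
    Function.Injective (Polynomial.aeval (RatFunc.X (K := F))⁻¹ : F[X] →ₐ[F] RatFunc F) := by
  rw [injective_iff_map_eq_zero]
  intro p hp
  haveI : Invertible (RatFunc.X (K := F))⁻¹ :=
    invertibleOfNonzero (inv_ne_zero RatFunc.X_ne_zero)
  have h2 : (⅟(RatFunc.X (K := F))⁻¹) = RatFunc.X := by
    rw [invOf_eq_inv, inv_inv]
  have hp' : Polynomial.eval₂ (algebraMap F (RatFunc F)) (RatFunc.X)⁻¹ p = 0 := by
    rwa [Polynomial.aeval_def] at hp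
  rw [← Polynomial.eval₂_reverse_eq_zero_iff (algebraMap F (RatFunc F)) (RatFunc.X)⁻¹ p] at hp'
  rw [h2] at hp'
  have h3 : algebraMap F[X] (RatFunc F) p.reverse = 0 := by
    rw [algebraMap_ratFunc_eq_aeval, Polynomial.aeval_def]
    exact hp'
  have h4 : p.reverse = 0 := RatFunc.algebraMap_injective F (by simpa using h3)
  exact Polynomial.reverse_eq_zero.mp h4

noncomputable section

open scoped TensorProduct

variable (F : Type*) [Field F]

/-- The automorphism `q ↦ q⁻¹` of `F(q)`: the unique `F`-algebra map sending `q` to `q⁻¹`. -/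
def qinv : RatFunc F →ₐ[F] RatFunc F :=
  IsFractionRing.liftAlgHom (aeval_inv_injective F)

/-- Coefficient of `qⁿ` in the Laurent-series expansion at `q = 0`, as an `F`-linear map. -/
def coeffL (n : ℤ) : RatFunc F →ₗ[F] F where
  toFun h := ((h : LaurentSeries F)).coeff n
  map_add' a b := by
    rw [map_add, HahnSeries.coeff_add]
  map_smul' c a := by
    rw [Algebra.smul_def, map_mul, RingHom.id_apply, smul_eq_mul]
    rw [show algebraMap F (RatFunc F) c = ((Polynomial.C c : Polynomial F) : RatFunc F) from
      (RatFunc.algebraMap_C c).symm, ← RatFunc.coe_coe, Polynomial.coe_C, PowerSeries.coe_C,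
      HahnSeries.C_mul_eq_smul, HahnSeries.coeff_smul, smul_eq_mul]

/-- `Res_{q=0} (h dq)`: the coefficient of `q⁻¹` in the Laurent expansion of `h` at `q = 0`. -/
def res0 (h : RatFunc F) : F := coeffL F (-1) h

/-- `Res_{q=∞} (h dq) := −Res_{q=0} (q⁻² h(q⁻¹) dq)`. -/
def resInf (h : RatFunc F) : F := - res0 F ((RatFunc.X)⁻¹ ^ 2 * qinv F h)

variable (V : Type*) [AddCommGroup V] [Module F V]

/-- The loop space `K := F(q) ⊗_F V` of `V`-valued rational functions. -/
abbrev LoopK := RatFunc F ⊗[F] V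

/-- `f(q) ↦ f(q⁻¹)` on `K`. -/
def finv : LoopK F V →ₗ[F] LoopK F V := LinearMap.rTensor V (qinv F).toLinearMap

/-- The `V`-valued coefficient of `qⁿ` in the expansion at `q = 0` of an element of `K`. -/
def vcoeff (n : ℤ) : LoopK F V →ₗ[F] V :=
  (TensorProduct.lid F V).toLinearMap ∘ₗ LinearMap.rTensor V (coeffL F n)

/-- The loop-space form
`Ω(f,g) = −Res_{q=0}(q⁻¹ B_q(f(q⁻¹),g(q)) dq) − Res_{q=∞}(q⁻¹ B_q(f(q⁻¹),g(q)) dq)`. -/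
def Omega (B : LinearMap.BilinForm F V) (f g : LoopK F V) : F :=
  - res0 F ((RatFunc.X)⁻¹ * (LinearMap.BilinForm.baseChange (RatFunc F) B) (finv F V f) g)
  - resInf F ((RatFunc.X)⁻¹ * (LinearMap.BilinForm.baseChange (RatFunc F) B) (finv F V f) g)

/-- `K₊`: `V`-valued Laurent polynomials in `q`. -/
def Kplus : Submodule F (LoopK F V) :=
  Submodule.span F {z : LoopK F V | ∃ (n : ℤ) (v : V), z = (RatFunc.X ^ n) ⊗ₜ[F] v}

/-- `K₋`: `V`-valued rational functions regular at `q = 0` and vanishing at `q = ∞`. -/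
def Kminus : Submodule F (LoopK F V) where
  carrier := {f | (∀ n : ℤ, n < 0 → vcoeff F V n f = 0) ∧
    (∀ n : ℤ, n ≤ 0 → vcoeff F V n (finv F V f) = 0)}
  add_mem' := by
    rintro a b ⟨ha1, ha2⟩ ⟨hb1, hb2⟩
    constructor
    · intro n hn; rw [map_add, ha1 n hn, hb1 n hn, add_zero]
    · intro n hn; rw [map_add, map_add, ha2 n hn, hb2 n hn, add_zero]
  zero_mem' := by
    constructor <;> intro n hn <;> simp
  smul_mem' := by
    rintro c a ⟨ha1, ha2⟩
    constructor
    · intro n hn; rw [map_smul, ha1 n hn, smul_zero]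
    · intro n hn; rw [map_smul, map_smul, ha2 n hn, smul_zero]

/-- The value at `q = 1` of a `V`-valued Laurent polynomial (the sum of its coefficients). -/
def evalOne (f : LoopK F V) : V := ∑ᶠ n : ℤ, vcoeff F V n f

/-- Scalar `K₊ ⊂ F(q)`: the Laurent polynomials. -/
def KplusS : Submodule F (RatFunc F) :=
  Submodule.span F (Set.range fun n : ℤ => (RatFunc.X : RatFunc F) ^ n)

/-- Scalar `K₋ ⊂ F(q)`: rational functions regular at `q = 0` and vanishing at `q = ∞`. -/
def KminusS : Submodule F (RatFunc F) where
  carrier := {h | (∀ n : ℤ, n < 0 → coeffL F n h = 0) ∧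
    (∀ n : ℤ, n ≤ 0 → coeffL F n (qinv F h) = 0)}
  add_mem' := by
    rintro a b ⟨ha1, ha2⟩ ⟨hb1, hb2⟩
    constructor
    · intro n hn; rw [map_add, ha1 n hn, hb1 n hn, add_zero]
    · intro n hn; rw [map_add, map_add, ha2 n hn, hb2 n hn, add_zero]
  zero_mem' := by
    constructor <;> intro n hn <;> simp
  smul_mem' := by
    rintro c a ⟨ha1, ha2⟩
    constructor
    · intro n hn; rw [map_smul, ha1 n hn, smul_zero]
    · intro n hn; rw [map_smul, map_smul, ha2 n hn, smul_zero]

/-! For Laurent polynomials `f, g` the function `q⁻¹ B_q(f(q⁻¹), g(q))` is again a Laurent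
polynomial, and `Ω(f, g)` is minus the sum of its residues at `0` and `∞`. Since `Ω` is
`F`-bilinear it suffices to treat monomials, and for `qᵏ` the two residues cancel: both vanish
unless `k = -1`, and `q⁻¹ dq` has residue `1` at `0` and `-1` at `∞`. -/

theorem LinearMap.apply_eq_zero_of_mem_span₂ {R M N P : Type*} [CommSemiring R]
    [AddCommMonoid M] [AddCommMonoid N] [AddCommMonoid P] [Module R M] [Module R N] [Module R P]
    (b : M →ₗ[R] N →ₗ[R] P) {s : Set M} {t : Set N} (hst : ∀ x ∈ s, ∀ y ∈ t, b x y = 0)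
    {x : M} {y : N} (hx : x ∈ Submodule.span R s) (hy : y ∈ Submodule.span R t) : b x y = 0 := by
  have hmem := Submodule.apply_mem_map₂ b hx hy
  rwa [Submodule.map₂_span_span, Submodule.span_eq_bot.mpr, Submodule.mem_bot] at hmem
  rintro _ ⟨x, hx, y, hy, rfl⟩
  exact hst x hx y hy

theorem qinv_X : qinv F RatFunc.X = (RatFunc.X : RatFunc F)⁻¹ := by
  rw [← RatFunc.algebraMap_X, qinv, IsFractionRing.liftAlgHom_apply,
    IsFractionRing.lift_algebraMap]
  simp

theorem qinv_X_zpow (k : ℤ) : qinv F ((RatFunc.X : RatFunc F) ^ k) = RatFunc.X ^ (-k) := by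
  rw [map_zpow₀, qinv_X, inv_zpow, zpow_neg]

theorem coeffL_X_zpow (k n : ℤ) :
    coeffL F n ((RatFunc.X : RatFunc F) ^ k) = if n = k then 1 else 0 := by
  change (((RatFunc.X : RatFunc F) ^ k : RatFunc F) : LaurentSeries F).coeff n = _
  rw [map_zpow₀, RatFunc.coe_X, ← RatFunc.single_zpow, HahnSeries.coeff_single]
  split <;> rfl

def residueSum : RatFunc F →ₗ[F] F :=
  coeffL F (-1) -
    coeffL F (-1) ∘ₗ LinearMap.mulLeft F ((RatFunc.X)⁻¹ ^ 2) ∘ₗ (qinv F).toLinearMap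

theorem residueSum_apply (h : RatFunc F) : residueSum F h = res0 F h + resInf F h := by
  rw [residueSum, LinearMap.sub_apply, resInf, res0, res0, sub_eq_add_neg]
  rfl

theorem residueSum_X_zpow (k : ℤ) : residueSum F ((RatFunc.X : RatFunc F) ^ k) = 0 := by
  have hX : (RatFunc.X : RatFunc F) ≠ 0 := RatFunc.X_ne_zero
  have hinf : (RatFunc.X : RatFunc F)⁻¹ ^ 2 * qinv F (RatFunc.X ^ k) = RatFunc.X ^ (-2 - k) := by
    rw [qinv_X_zpow, sub_eq_add_neg, zpow_add₀ hX, zpow_neg _ 2, zpow_ofNat, inv_pow]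
  have hexp : -1 = -2 - k ↔ -1 = k := by omega
  simp only [residueSum, LinearMap.sub_apply, LinearMap.comp_apply, LinearMap.mulLeft_apply,
    AlgHom.toLinearMap_apply, hinf, coeffL_X_zpow, hexp, sub_self]

def omegaForm (B : LinearMap.BilinForm F V) : LinearMap.BilinForm F (LoopK F V) :=
  ((B.baseChange (RatFunc F)).restrictScalars₁₂ F F).compr₂
      (-(residueSum F ∘ₗ LinearMap.mulLeft F (RatFunc.X)⁻¹)) ∘ₗ finv F V

theorem Omega_eq_omegaForm (B : LinearMap.BilinForm F V) (f g : LoopK F V) :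
    Omega F V B f g = omegaForm F V B f g := by
  simp only [Omega, omegaForm, LinearMap.comp_apply, LinearMap.compr₂_apply,
    LinearMap.restrictScalars₁₂_apply_apply, LinearMap.neg_apply, LinearMap.mulLeft_apply,
    residueSum_apply]
  ring

theorem omegaForm_X_zpow_tmul (B : LinearMap.BilinForm F V) (m n : ℤ) (v w : V) :
    omegaForm F V B ((RatFunc.X ^ m : RatFunc F) ⊗ₜ[F] v) ((RatFunc.X ^ n : RatFunc F) ⊗ₜ[F] w)
      = 0 := by
  have hX : (RatFunc.X : RatFunc F) ≠ 0 := RatFunc.X_ne_zero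
  have hmonomial : (RatFunc.X : RatFunc F)⁻¹ * (RatFunc.X ^ (-m) * RatFunc.X ^ n)
      = RatFunc.X ^ (-1 + (-m + n)) := by
    rw [← zpow_neg_one, ← zpow_add₀ hX, ← zpow_add₀ hX]
  simp only [omegaForm, finv, LinearMap.comp_apply, LinearMap.rTensor_tmul,
    AlgHom.toLinearMap_apply, qinv_X_zpow, LinearMap.compr₂_apply,
    LinearMap.restrictScalars₁₂_apply_apply, LinearMap.BilinForm.baseChange_tmul,
    LinearMap.neg_apply, LinearMap.mulLeft_apply, map_smul, hmonomial, residueSum_X_zpow,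
    neg_zero, smul_zero]

theorem Kplus_isotropic (B : LinearMap.BilinForm F V) :
    ∀ f ∈ Kplus F V, ∀ g ∈ Kplus F V, Omega F V B f g = 0 := by
  intro f hf g hg
  rw [Omega_eq_omegaForm]
  refine LinearMap.apply_eq_zero_of_mem_span₂ _ ?_ hf hg
  rintro _ ⟨m, v, rfl⟩ _ ⟨n, w, rfl⟩
  exact omegaForm_X_zpow_tmul F V B m n v w

end
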